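/- Let (Ω, ℱ, ℙ) be a probability space, let T, B : Ω → ℝ be measurable, let b₀ ≥ 0 and δ > 0 be real numbers, let α ∈ (0,1) and η ∈ (0,α), let q ∈ ℝ, and let cv : ℝ × ℝ → ℝ be such that ω ↦ cv(B(ω)−δ, B(ω)+δ) is measurable. Assume: (i) ℙ(B − δ ≤ b₀ ≤ B + δ) ≥ 1 − η; (ii) for all l, u ∈ ℝ with l ≤ b₀ ≤ u, cv(l, u) ≥ q; and (iii) ℙ(T ≥ q) ≤ α − η. Then ℙ(T ≥ cv(B − δ, B + δ)) ≤ α. -/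
import Mathlib


open MeasureTheory

/-- Abstract Bonferroni size-control argument: if the confidence interval
`[B − δ, B + δ]` covers `b₀` with probability at least `1 − η`, the critical value
`cv(l,u)` dominates the oracle quantile `q` whenever `l ≤ b₀ ≤ u`, and
`ℙ(T ≥ q) ≤ α − η`, then `ℙ(T ≥ cv(B − δ, B + δ)) ≤ α`. -/
theorem bonferroni_size_control {Ω : Type*} [MeasurableSpace Ω]
    (μ : Measure Ω) [IsProbabilityMeasure μ]
    (T B : Ω → ℝ) (hT : Measurable T) (hB : Measurable B)
    (b₀ δ : ℝ) (hb₀ : 0 ≤ b₀) (hδ : 0 < δ)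
    (α η : ℝ) (hα : α ∈ Set.Ioo (0 : ℝ) 1) (hη : η ∈ Set.Ioo (0 : ℝ) α)
    (q : ℝ) (cv : ℝ → ℝ → ℝ)
    (hcv_meas : Measurable fun ω => cv (B ω - δ) (B ω + δ))
    (hcover : ENNReal.ofReal (1 - η) ≤ μ {ω | B ω - δ ≤ b₀ ∧ b₀ ≤ B ω + δ})
    (hmono : ∀ l u : ℝ, l ≤ b₀ → b₀ ≤ u → q ≤ cv l u)
    (horacle : μ {ω | q ≤ T ω} ≤ ENNReal.ofReal (α - η)) :
    μ {ω | cv (B ω - δ) (B ω + δ) ≤ T ω} ≤ ENNReal.ofReal α := by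
  set C : Set Ω := {ω | B ω - δ ≤ b₀ ∧ b₀ ≤ B ω + δ} with hC
  have hCmeas : MeasurableSet C := by
    apply MeasurableSet.inter
    · exact measurableSet_le (hB.sub measurable_const) measurable_const
    · exact measurableSet_le measurable_const (hB.add measurable_const)
  have hsub : {ω | cv (B ω - δ) (B ω + δ) ≤ T ω} ⊆ {ω | q ≤ T ω} ∪ Cᶜ := by
    intro ω hω
    by_cases hc : ω ∈ C
    · left
      exact le_trans (hmono _ _ hc.1 hc.2) hω
    · right; exact hc
  have hcompl : μ Cᶜ ≤ ENNReal.ofReal η := by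
    have := prob_compl_eq_one_sub (μ := μ) hCmeas
    rw [this]
    have h1 : ENNReal.ofReal (1 - η) ≤ μ C := hcover
    have : 1 - ENNReal.ofReal (1 - η) = ENNReal.ofReal η := by
      have h : ENNReal.ofReal (1 - η) + ENNReal.ofReal η = 1 := by
        rw [← ENNReal.ofReal_add (by linarith [hη.2, hα.2]) hη.1.le]
        norm_num
      rw [← h, ENNReal.add_sub_cancel_left (by simp)]
    calc 1 - μ C ≤ 1 - ENNReal.ofReal (1 - η) := tsub_le_tsub_left h1 1
      _ = ENNReal.ofReal η := this
  calc μ {ω | cv (B ω - δ) (B ω + δ) ≤ T ω}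
      ≤ μ ({ω | q ≤ T ω} ∪ Cᶜ) := measure_mono hsub
    _ ≤ μ {ω | q ≤ T ω} + μ Cᶜ := measure_union_le _ _
    _ ≤ ENNReal.ofReal (α - η) + ENNReal.ofReal η := add_le_add horacle hcompl
    _ = ENNReal.ofReal α := by
        rw [← ENNReal.ofReal_add (by linarith [hη.2]) (le_of_lt hη.1)]
        ring_nf
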